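/- Fix integers n ≥ 1 and m ≥ 1, let I = (Fin m → Fin n) and D = n^m. For a tuple σ : Fin m → Equiv.Perm (Fin n), let Π_σ : Equiv.Perm I be the blockwise permutation x ↦ (fun b => σ b (x b)) and P_σ : Matrix I I ℂ its permutation matrix. Then for every matrix U in the unitary group of Matrix I I ℂ, every target basis label x* : I, and every vector φ : I → ℂ with Σ_x ‖φ x‖² = 1, there exists a tuple of permutations σ* such that ‖(((P_{σ*})ᴴ · U) *ᵥ φ) x*‖² ≥ 1/n^m. -/

import Mathlib

open Matrix

/-!
Since `U` is unitary, `ψ = U φ` is again a unit vector, so one of its `n ^ m` coordinates, say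
`ψ y`, has squared modulus at least `1 / n ^ m`. The blockwise transpositions `σ b = (x* b  y b)`
send `x*` to `y`, so `(P_σᴴ ψ) x* = ψ y`.
-/

theorem sum_norm_sq_mulVec_of_mem_unitaryGroup {𝕜 ι : Type*} [RCLike 𝕜] [Fintype ι]
    [DecidableEq ι] {U : Matrix ι ι 𝕜} (hU : U ∈ unitaryGroup ι 𝕜) (v : ι → 𝕜) :
    ∑ i, ‖(U *ᵥ v) i‖ ^ 2 = ∑ i, ‖v i‖ ^ 2 := by
  have hU' : toEuclideanCLM (𝕜 := 𝕜) U ∈ unitary (EuclideanSpace 𝕜 ι →L[𝕜] EuclideanSpace 𝕜 ι) :=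
    Unitary.map_mem toEuclideanCLM hU
  have hnorm := ContinuousLinearMap.norm_map_of_mem_unitary hU' (WithLp.toLp 2 v)
  rw [toEuclideanCLM_toLp] at hnorm
  rw [← EuclideanSpace.norm_sq_eq (WithLp.toLp 2 (U *ᵥ v)), hnorm, EuclideanSpace.norm_sq_eq]

theorem exists_inv_card_le_of_sum_eq_one {ι : Type*} [Fintype ι] {f : ι → ℝ}
    (hf : ∑ i, f i = 1) : ∃ i, (Fintype.card ι : ℝ)⁻¹ ≤ f i := by
  have hne : (Finset.univ : Finset ι).Nonempty := by
    by_contra h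
    simp_all [Finset.not_nonempty_iff_eq_empty]
  have hsum : ∑ _i : ι, (Fintype.card ι : ℝ)⁻¹ ≤ ∑ i, f i := by
    rw [hf, Finset.sum_const, Finset.card_univ, nsmul_eq_mul,
      mul_inv_cancel₀ (Nat.cast_ne_zero.mpr (Finset.card_ne_zero.mpr hne))]
  obtain ⟨i, -, hi⟩ := Finset.exists_le_of_sum_le hne hsum
  exact ⟨i, hi⟩

theorem conjTranspose_mulVec_apply_of_apply_eq_ite {𝕜 ι : Type*} [RCLike 𝕜] [Fintype ι]
    [DecidableEq ι] {M : Matrix ι ι 𝕜} {e : ι → ι} (hM : ∀ x y, M x y = if x = e y then 1 else 0)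
    (v : ι → 𝕜) (x : ι) : (Mᴴ *ᵥ v) x = v (e x) := by
  simp [mulVec, dotProduct, hM, apply_ite]

theorem exists_blockwise_permutation_overlap_general (n m : ℕ)
    (P : (Fin m → Equiv.Perm (Fin n)) →
      Matrix (Fin m → Fin n) (Fin m → Fin n) ℂ)
    (hP : ∀ σ x y, P σ x y = if x = (fun b => σ b (y b)) then 1 else 0)
    (U : Matrix.unitaryGroup (Fin m → Fin n) ℂ) (xstar : Fin m → Fin n)
    (φ : (Fin m → Fin n) → ℂ) (hφ : ∑ x, ‖φ x‖ ^ 2 = 1) :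
    ∃ σstar : Fin m → Equiv.Perm (Fin n),
      (((n : ℝ)) ^ m)⁻¹ ≤
        ‖((((P σstar)ᴴ * (U : Matrix (Fin m → Fin n) (Fin m → Fin n) ℂ)) *ᵥ φ) xstar)‖ ^ 2 := by
  set ψ := (U : Matrix (Fin m → Fin n) (Fin m → Fin n) ℂ) *ᵥ φ
  have hψ : ∑ x, ‖ψ x‖ ^ 2 = 1 := by
    rw [sum_norm_sq_mulVec_of_mem_unitaryGroup U.2, hφ]
  obtain ⟨y, hy⟩ := exists_inv_card_le_of_sum_eq_one hψ
  refine ⟨fun b => Equiv.swap (xstar b) (y b), ?_⟩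
  have hswap : (fun b => Equiv.swap (xstar b) (y b) (xstar b)) = y :=
    funext fun b => Equiv.swap_apply_left _ _
  rw [← mulVec_mulVec, conjTranspose_mulVec_apply_of_apply_eq_ite (hP _), hswap]
  simpa [Fintype.card_fun] using hy

/-- Existence of a uniform overlap lower bound via block permutations: for any
unitary `U`, target basis label `x*`, and unit vector `φ`, some blockwise
relabeling `σ*` achieves overlap probability at least `1/n^m`. -/
theorem exists_blockwise_permutation_overlap (n m : ℕ) (hn : 1 ≤ n) (hm : 1 ≤ m)
    (P : (Fin m → Equiv.Perm (Fin n)) →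
      Matrix (Fin m → Fin n) (Fin m → Fin n) ℂ)
    (hP : ∀ σ x y, P σ x y = if x = (fun b => σ b (y b)) then 1 else 0)
    (U : Matrix.unitaryGroup (Fin m → Fin n) ℂ) (xstar : Fin m → Fin n)
    (φ : (Fin m → Fin n) → ℂ) (hφ : ∑ x, ‖φ x‖ ^ 2 = 1) :
    ∃ σstar : Fin m → Equiv.Perm (Fin n),
      (((n : ℝ)) ^ m)⁻¹ ≤
        ‖((((P σstar)ᴴ * (U : Matrix (Fin m → Fin n) (Fin m → Fin n) ℂ)) *ᵥ φ) xstar)‖ ^ 2 :=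
  exists_blockwise_permutation_overlap_general n m P hP U xstar φ hφ
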